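/- arXiv:1901.06377 — 2 statements merged into one kernel-verified Lean document; each statement's English description precedes it below -/
import Mathlib

section
/- For all integers k ≥ 2 and all reals a ≥ 4√(ln k / k), we have e^{-(k/2)(a − 1/k)²}·√(a·k) ≤ 2·(ln k / k⁷)^{1/4} < 1. In particular e^{-(k/2)(a−1/k)²}√(ak) < 1. -/
/-!
Write `t = a - 1/k` and `x = k t²`. Since `k log k ≥ 1`, we have `1/k ≤ √(log k / k)`, so the
hypothesis gives `t ≥ 3√(log k / k)`, i.e. `x ≥ 9 log k`, and `a ≤ 4t/3`. Comparing fourth powers,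
the claim becomes `(ak)² e^{-2x} ≤ 16 log k / k⁷`; now `(ak)² ≤ (16/9) k x` while
`e^{2x} = e^x e^x ≥ k⁹ x`, which leaves `1/(9k⁸) ≤ log k / k⁷`, again `k log k ≥ 1`.
-/

open Real

lemma exp_mul_sqrt_pow_four {k t a : ℝ} (hak : 0 ≤ a * k) :
    (exp (-(k / 2) * t ^ 2) * √(a * k)) ^ 4 = (a * k) ^ 2 / exp (2 * (k * t ^ 2)) := by
  have hexp : exp (-(k / 2) * t ^ 2) ^ 4 = (exp (2 * (k * t ^ 2)))⁻¹ := by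
    rw [← exp_nat_mul, ← exp_neg]
    ring_nf
  rw [mul_pow, hexp, show (4 : ℕ) = 2 * 2 from rfl, pow_mul, sq_sqrt hak, div_eq_inv_mul]

lemma pow_mul_le_exp_two_mul {k x : ℝ} {n : ℕ} (hk : 0 < k) (hx : n * log k ≤ x) (hx0 : 0 ≤ x) :
    k ^ n * x ≤ exp (2 * x) := by
  have hkn : k ^ n ≤ exp x :=
    calc k ^ n = exp (n * log k) := by rw [exp_nat_mul, exp_log hk]
      _ ≤ exp x := exp_le_exp.mpr hx
  calc k ^ n * x ≤ exp x * exp x :=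
        mul_le_mul hkn ((le_add_of_nonneg_right zero_le_one).trans (add_one_le_exp x)) hx0
          (exp_pos x).le
    _ = exp (2 * x) := by rw [← exp_add, two_mul]

lemma exp_mul_sqrt_pow_four_le {k t a : ℝ} (hk : 0 < k) (hx : 9 * log k ≤ k * t ^ 2)
    (ha0 : 0 ≤ a) (ha : a ≤ 4 / 3 * t) :
    (exp (-(k / 2) * t ^ 2) * √(a * k)) ^ 4 ≤ 16 / (9 * k ^ 8) := by
  have hx0 : 0 ≤ k * t ^ 2 := by positivity
  have hak : (a * k) ^ 2 ≤ 16 / 9 * k * (k * t ^ 2) :=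
    calc (a * k) ^ 2 = a ^ 2 * k ^ 2 := by ring
      _ ≤ (4 / 3 * t) ^ 2 * k ^ 2 := by gcongr
      _ = 16 / 9 * k * (k * t ^ 2) := by ring
  have hexp := pow_mul_le_exp_two_mul (n := 9) hk (by exact_mod_cast hx) hx0
  rw [exp_mul_sqrt_pow_four (by positivity)]
  calc (a * k) ^ 2 / exp (2 * (k * t ^ 2))
      ≤ 16 / 9 * k * (k * t ^ 2) / exp (2 * (k * t ^ 2)) := by gcongr
    _ ≤ 16 / 9 * k / k ^ 9 := by
        rw [div_le_div_iff₀ (exp_pos _) (by positivity)]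
        nlinarith
    _ = 16 / (9 * k ^ 8) := by field_simp

lemma two_mul_rpow_quarter_pow_four {y : ℝ} (hy : 0 ≤ y) :
    (2 * y ^ ((1 : ℝ) / 4)) ^ 4 = 16 * y := by
  rw [mul_pow, ← rpow_natCast (y ^ _), ← rpow_mul hy]
  norm_num

lemma one_le_log_mul_self {k : ℝ} (hk : 2 ≤ k) : 1 ≤ log k * k := by
  have hlog : log 2 ≤ log k := log_le_log two_pos hk
  nlinarith [log_two_gt_d9]

lemma inv_le_sqrt_log_div {k : ℝ} (hk : 2 ≤ k) : 1 / k ≤ √(log k / k) := by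
  have hk0 : 0 < k := by linarith
  rw [le_sqrt (by positivity) (div_nonneg (log_nonneg (by linarith)) hk0.le), div_pow, one_pow,
    div_le_div_iff₀ (by positivity) hk0]
  nlinarith [one_le_log_mul_self hk]

lemma log_div_pow_seven_lt {k : ℝ} (hk : 2 ≤ k) : log k / k ^ 7 < 1 / 16 := by
  have hk0 : 0 < k := by linarith
  have hlog : log k < k := (log_le_sub_one_of_pos hk0).trans_lt (by linarith)
  have h64 : (2 : ℝ) ^ 6 ≤ k ^ 6 := pow_le_pow_left₀ (by norm_num) hk 6
  rw [div_lt_div_iff₀ (by positivity) (by norm_num)]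
  nlinarith

/-- For integers `k ≥ 2` and reals `a ≥ 4√(ln k / k)`,
`e^{-(k/2)(a − 1/k)²}√(ak) ≤ 2(ln k / k⁷)^{1/4} < 1`. -/
theorem boundary_max_bound (k : ℕ) (hk : 2 ≤ k) (a : ℝ)
    (ha : 4 * Real.sqrt (Real.log k / k) ≤ a) :
    Real.exp (-((k : ℝ) / 2) * (a - 1 / k) ^ 2) * Real.sqrt (a * k) ≤
        2 * (Real.log k / (k : ℝ) ^ 7) ^ ((1 : ℝ) / 4) ∧
      2 * (Real.log k / (k : ℝ) ^ 7) ^ ((1 : ℝ) / 4) < 1 := by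
  have hk2 : (2 : ℝ) ≤ k := by exact_mod_cast hk
  have hk0 : (0 : ℝ) < k := by linarith
  have hy : 0 ≤ log k / (k : ℝ) ^ 7 := div_nonneg (log_nonneg (by linarith)) (by positivity)
  have hs := inv_le_sqrt_log_div hk2
  have hs2 : k * √(log k / k) ^ 2 = log k := by
    rw [sq_sqrt (by positivity)]; field_simp
  have hx : 9 * log k ≤ k * (a - 1 / k) ^ 2 := by
    have hsq : (3 * √(log k / k)) ^ 2 ≤ (a - 1 / k) ^ 2 :=
      pow_le_pow_left₀ (by positivity) (by linarith) 2
    nlinarith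
  have ha0 : 0 ≤ a := (mul_nonneg zero_le_four (sqrt_nonneg _)).trans ha
  have hbound := exp_mul_sqrt_pow_four_le hk0 hx ha0 (by linarith)
  have h8 : 16 / (9 * (k : ℝ) ^ 8) ≤ 16 * (log k / k ^ 7) := by
    rw [div_le_iff₀ (by positivity)]
    have hmul : 16 * (log k / k ^ 7) * (9 * k ^ 8) = 144 * (log k * k) := by field_simp; ring
    linarith [one_le_log_mul_self hk2]
  constructor
  · refine le_of_pow_le_pow_left₀ four_ne_zero (by positivity) ?_
    rw [two_mul_rpow_quarter_pow_four hy]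
    exact hbound.trans h8
  · refine lt_of_pow_lt_pow_left₀ 4 zero_le_one ?_
    rw [two_mul_rpow_quarter_pow_four hy]
    linarith [log_div_pow_seven_lt hk2]
end

section
/- The function g(a) = e^{-(k/8)(a − √(a² − 2/k))²}·√(k·a·(a − √(a² − 2/k))), defined for real a ≥ √(2/k), attains its maximum at a = √(2/k), where its value equals √2·e^{-1/4}. -/
/-!
Write `s = √(a² - 2/k)` and `u = k a (a - s)`. Since `s² = a² - 2/k`, the exponent is affine in `u`:
`k (a - s)² = 2u - 2`, so `g(a) = e^{-(u-1)/4} √u`. As a function of `u` this is maximal at `u = 2`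
by `x + 1 ≤ eˣ`, and `u = 2` exactly when `s = 0`, i.e. at `a = √(2/k)`.
-/

open Real

lemma exp_neg_sub_one_div_four_mul_sqrt_le (u : ℝ) :
    exp (-(u - 1) / 4) * √u ≤ √2 * exp (-1 / 4) := by
  have hu : u ≤ 2 * exp ((u - 2) / 4) ^ 2 := by
    rw [sq, ← exp_add]
    linarith [add_one_le_exp ((u - 2) / 4 + (u - 2) / 4)]
  have hsqrt : √u ≤ √2 * exp ((u - 2) / 4) :=
    calc √u ≤ √(2 * exp ((u - 2) / 4) ^ 2) := sqrt_le_sqrt hu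
      _ = √2 * exp ((u - 2) / 4) := by rw [sqrt_mul zero_le_two, sqrt_sq (exp_pos _).le]
  calc exp (-(u - 1) / 4) * √u ≤ exp (-(u - 1) / 4) * (√2 * exp ((u - 2) / 4)) := by gcongr
    _ = √2 * exp (-1 / 4) := by rw [mul_left_comm, ← exp_add]; ring_nf

lemma neg_div_eight_mul_sub_sqrt_sq {c a : ℝ} (hc : c ≠ 0) (ha : 2 / c ≤ a ^ 2) :
    -(c / 8) * (a - √(a ^ 2 - 2 / c)) ^ 2 = -(c * a * (a - √(a ^ 2 - 2 / c)) - 1) / 4 := by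
  have hs : √(a ^ 2 - 2 / c) ^ 2 = a ^ 2 - 2 / c := sq_sqrt (sub_nonneg.mpr ha)
  have hc2 : c * (2 / c) = 2 := mul_div_cancel₀ 2 hc
  linear_combination (-c / 8) * hs + hc2 / 8

/-- The function
`g(a) = e^{-(k/8)(a−√(a²−2/k))²}√(ka(a−√(a²−2/k)))`, for `a ≥ √(2/k)`, is maximized at
`a = √(2/k)`, where it equals `√2·e^{-1/4}`. -/
theorem interior_max_value (k : ℕ) (hk : 0 < k) :
    (∀ a : ℝ, Real.sqrt (2 / k) ≤ a →
      Real.exp (-((k : ℝ) / 8) * (a - Real.sqrt (a ^ 2 - 2 / k)) ^ 2) *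
          Real.sqrt ((k : ℝ) * a * (a - Real.sqrt (a ^ 2 - 2 / k))) ≤
        Real.sqrt 2 * Real.exp (-(1 : ℝ) / 4)) ∧
    (Real.exp (-((k : ℝ) / 8) *
          (Real.sqrt (2 / k) - Real.sqrt ((Real.sqrt (2 / k)) ^ 2 - 2 / k)) ^ 2) *
        Real.sqrt ((k : ℝ) * Real.sqrt (2 / k) *
          (Real.sqrt (2 / k) - Real.sqrt ((Real.sqrt (2 / k)) ^ 2 - 2 / k))) =
      Real.sqrt 2 * Real.exp (-(1 : ℝ) / 4)) := by
  have hk0 : (k : ℝ) ≠ 0 := by positivity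
  have h2k : (0 : ℝ) ≤ 2 / k := by positivity
  refine ⟨fun a ha => ?_, ?_⟩
  · rw [neg_div_eight_mul_sub_sqrt_sq hk0 (sqrt_le_iff.mp ha).2]
    exact exp_neg_sub_one_div_four_mul_sqrt_le _
  · have hu : (k : ℝ) * √(2 / k) * (√(2 / k) - √(√(2 / k) ^ 2 - 2 / k)) = 2 := by
      rw [sq_sqrt h2k, sub_self, sqrt_zero, sub_zero, mul_assoc, mul_self_sqrt h2k,
        mul_div_cancel₀ 2 hk0]
    rw [neg_div_eight_mul_sub_sqrt_sq hk0 (sq_sqrt h2k).ge, hu, mul_comm]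
    norm_num
end
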